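/- Let (X_1,...,X_K, Y, S, W) be finite-valued random variables such that X_1,...,X_K are conditionally i.i.d. given (S,W). Then I(X_1; Y | S, W) ≤ (1/K)·I(X_1,...,X_K; Y | S, W). -/

import Mathlib

open Finset
open scoped Classical BigOperators

/-- Probability mass function of the random variable `X` under the (finite) measure `μ`. -/
noncomputable def distOf {Ω α : Type*} [Fintype Ω] (μ : Ω → ℝ) (X : Ω → α) (a : α) : ℝ :=
  ∑ ω, if X ω = a then μ ω else 0

/-- Shannon entropy (natural log) of a finite-valued random variable. -/
noncomputable def ent {Ω α : Type*} [Fintype Ω] [Fintype α] (μ : Ω → ℝ) (X : Ω → α) : ℝ :=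
  ∑ a, Real.negMulLog (distOf μ X a)

/-- Conditional Shannon entropy `H(X | Z)`. -/
noncomputable def condEnt {Ω α γ : Type*} [Fintype Ω] [Fintype α] [Fintype γ]
    (μ : Ω → ℝ) (X : Ω → α) (Z : Ω → γ) : ℝ :=
  ent μ (fun ω => (X ω, Z ω)) - ent μ Z

/-- The tuple of random variables indexed by the finite set `A`. -/
def restr {Ω ι α : Type*} (X : ι → Ω → α) (A : Finset ι) : Ω → (A → α) :=
  fun ω i => X i ω

/-- Conditional mutual information `I(X ; Y | Z)`. -/
noncomputable def condMI {Ω α β γ : Type*} [Fintype Ω] [Fintype α] [Fintype β] [Fintype γ]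
    (μ : Ω → ℝ) (X : Ω → α) (Y : Ω → β) (Z : Ω → γ) : ℝ :=
  condEnt μ X Z + condEnt μ Y Z - condEnt μ (fun ω => (X ω, Y ω)) Z


/-! With `Z = (S, W)`, write `I(X; Y | Z) = H(X | Z) - H(X | Y, Z)`. Conditional independence given
`Z` makes `H(X_1, …, X_K | Z) = K · H(X_1 | Z)`, while subadditivity of conditional entropy (Gibbs'
inequality) gives `H(X_1, …, X_K | Y, Z) ≤ ∑ i, H(X_i | Y, Z)`, and exchangeability makes every
summand equal to `H(X_1 | Y, Z)`. -/

section Law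

variable {Ω α β γ : Type*} [Fintype Ω] (μ : Ω → ℝ)

lemma distOf_nonneg (hμ : ∀ ω, 0 ≤ μ ω) (T : Ω → α) (a : α) : 0 ≤ distOf μ T a :=
  sum_nonneg fun ω _ => ite_nonneg (hμ ω) le_rfl

variable [Fintype α]

lemma distOf_comp (T : Ω → α) (f : α → β) (b : β) :
    distOf μ (fun ω => f (T ω)) b = ∑ t, if f t = b then distOf μ T t else 0 := by
  simp only [distOf, ite_sum_zero]
  rw [sum_comm]
  refine sum_congr rfl fun ω _ => ?_
  rw [sum_eq_single (T ω) (fun t _ ht => by simp [Ne.symm ht]) (by simp)]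
  simp

lemma sum_distOf_pair [Fintype β] (T : Ω → α) (U : Ω → β) (b : β) :
    ∑ a, distOf μ (fun ω => (T ω, U ω)) (a, b) = distOf μ U b := by
  refine ((distOf_comp μ (fun ω => (T ω, U ω)) Prod.snd b).trans ?_).symm
  simp [Fintype.sum_prod_type]

end Law

section Entropy

open Real Function

variable {Ω α β : Type*} [Fintype Ω] [Fintype α] [Fintype β] (μ : Ω → ℝ)

lemma ent_comp_of_injective (T : Ω → α) {f : α → β} (hf : Injective f) :
    ent μ (fun ω => f (T ω)) = ent μ T := by
  have hfiber (t : α) : distOf μ (fun ω => f (T ω)) (f t) = distOf μ T t := by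
    simp only [distOf, hf.eq_iff]
  refine (Fintype.sum_of_injective f hf _ _ (fun b hb => ?_) fun t => by rw [hfiber]).symm
  rw [distOf_comp, sum_eq_zero fun t _ => if_neg fun h => hb ⟨t, h⟩, negMulLog_zero]

lemma ent_comp_congr {T T' : Ω → α} (h : ∀ t, distOf μ T t = distOf μ T' t) (f : α → β) :
    ent μ (fun ω => f (T ω)) = ent μ (fun ω => f (T' ω)) := by
  simp only [ent, distOf_comp, h]

lemma ent_pair (T : Ω → α) (U : Ω → β) :
    ent μ (fun ω => (T ω, U ω)) = ∑ b, ∑ a, negMulLog (distOf μ (fun ω => (T ω, U ω)) (a, b)) := by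
  rw [ent, Fintype.sum_prod_type, sum_comm]

end Entropy

section Gibbs

open Real

lemma sub_le_mul_log_div {w c : ℝ} (hw : 0 ≤ w) (hc : 0 ≤ c) (hwc : 0 < w → 0 < c) :
    w - c ≤ w * log (w / c) := by
  rcases hw.eq_or_lt with rfl | hw
  · simpa using hc
  have h := mul_le_mul_of_nonneg_left (one_sub_inv_le_log_of_pos (div_pos hw (hwc hw))) hw.le
  rwa [inv_div, mul_sub, mul_one, mul_div_cancel₀ _ hw.ne'] at h

lemma sum_negMulLog_add_negMulLog_sum_le {ι κ : Type*} [Fintype ι] [Fintype κ] (w : ι → κ → ℝ)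
    (hw : ∀ i j, 0 ≤ w i j) :
    ∑ i, ∑ j, negMulLog (w i j) + negMulLog (∑ i, ∑ j, w i j)
      ≤ ∑ i, negMulLog (∑ j, w i j) + ∑ j, negMulLog (∑ i, w i j) := by
  set a := fun i => ∑ j, w i j
  set b := fun j => ∑ i, w i j
  set M := ∑ i, ∑ j, w i j
  have hMb : M = ∑ j, b j := sum_comm
  have ha i : 0 ≤ a i := sum_nonneg fun j _ => hw i j
  have hb j : 0 ≤ b j := sum_nonneg fun i _ => hw i j
  have hwa i j : w i j ≤ a i := single_le_sum (fun j _ => hw i j) (mem_univ j)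
  have hwb i j : w i j ≤ b j := single_le_sum (fun i _ => hw i j) (mem_univ i)
  have haM i : a i ≤ M := single_le_sum (fun i _ => ha i) (mem_univ i)
  -- Gibbs' inequality against the product of the marginals `a i * b j / M`
  have hpt i j : w i j - a i * b j / M
      ≤ w i j * log (w i j) + w i j * log M - w i j * log (a i) - w i j * log (b j) := by
    rcases (hw i j).eq_or_lt with h0 | h0
    · rw [← h0]
      simpa using div_nonneg (mul_nonneg (ha i) (hb j)) ((ha i).trans (haM i))
    have hai := h0.trans_le (hwa i j)
    have hbj := h0.trans_le (hwb i j)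
    have hM := hai.trans_le (haM i)
    have hc : 0 < a i * b j / M := div_pos (mul_pos hai hbj) hM
    have h := sub_le_mul_log_div (hw i j) hc.le fun _ => hc
    rw [log_div h0.ne' hc.ne', log_div (mul_pos hai hbj).ne' hM.ne', log_mul hai.ne' hbj.ne'] at h
    linarith
  have hsum := sum_le_sum fun i (_ : i ∈ univ) => sum_le_sum fun j (_ : j ∈ univ) => hpt i j
  have hprod : ∑ i, ∑ j, a i * b j / M = M := by
    simp_rw [← sum_div, ← mul_sum, ← sum_mul, ← hMb]
    exact mul_self_div_self M
  have hlogM : ∑ i, ∑ j, w i j * log M = M * log M := by simp_rw [← sum_mul]; rfl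
  have hloga : ∑ i, ∑ j, w i j * log (a i) = ∑ i, a i * log (a i) := by
    simp_rw [← sum_mul]; rfl
  have hlogb : ∑ i, ∑ j, w i j * log (b j) = ∑ j, b j * log (b j) := by
    rw [sum_comm]; simp_rw [← sum_mul]; rfl
  simp only [sum_sub_distrib, sum_add_distrib, hprod, hlogM, hloga, hlogb] at hsum
  simp only [negMulLog, neg_mul, sum_neg_distrib]
  linarith

end Gibbs

section ConditionalEntropy

open Real Function

variable {Ω α β γ : Type*} [Fintype Ω] [Fintype α] [Fintype β] [Fintype γ] (μ : Ω → ℝ)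

lemma condMI_nonneg (hμ : ∀ ω, 0 ≤ μ ω) (X : Ω → α) (Y : Ω → β) (Z : Ω → γ) :
    0 ≤ condMI μ X Y Z := by
  set p := fun x y z => distOf μ (fun ω => ((X ω, Y ω), Z ω)) ((x, y), z)
  have hXZ x z : distOf μ (fun ω => (X ω, Z ω)) (x, z) = ∑ y, p x y z := by
    refine (distOf_comp μ (fun ω => ((X ω, Y ω), Z ω)) (fun t => (t.1.1, t.2)) (x, z)).trans ?_
    simp only [Fintype.sum_prod_type, Prod.mk.injEq, ite_and]
    rw [sum_comm]
    simp [p]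
  have hYZ y z : distOf μ (fun ω => (Y ω, Z ω)) (y, z) = ∑ x, p x y z := by
    refine (distOf_comp μ (fun ω => ((X ω, Y ω), Z ω)) (fun t => (t.1.2, t.2)) (y, z)).trans ?_
    simp [Fintype.sum_prod_type, ite_and, p]
  have hZ z : distOf μ Z z = ∑ x, ∑ y, p x y z := by
    refine (distOf_comp μ (fun ω => ((X ω, Y ω), Z ω)) Prod.snd z).trans ?_
    simp [Fintype.sum_prod_type, p]
  have hentZ : ent μ Z = ∑ z, negMulLog (∑ x, ∑ y, p x y z) := by simp only [ent, hZ]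
  have hentXYZ : ent μ (fun ω => ((X ω, Y ω), Z ω)) = ∑ z, ∑ x, ∑ y, negMulLog (p x y z) := by
    simp only [ent_pair, Fintype.sum_prod_type, p]
  have key := sum_le_sum fun z (_ : z ∈ univ) =>
    sum_negMulLog_add_negMulLog_sum_le (fun x y => p x y z) fun x y => distOf_nonneg μ hμ _ _
  simp only [sum_add_distrib] at key
  simp only [condMI, condEnt, ent_pair, hXZ, hYZ, hentZ, hentXYZ]
  linarith

lemma condEnt_pair_le (hμ : ∀ ω, 0 ≤ μ ω) (X : Ω → α) (Y : Ω → β) (Z : Ω → γ) :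
    condEnt μ (fun ω => (X ω, Y ω)) Z ≤ condEnt μ X Z + condEnt μ Y Z := by
  have h := condMI_nonneg μ hμ X Y Z
  rw [condMI] at h
  linarith

lemma condEnt_comp_of_injective (T : Ω → β) {f : β → α} (hf : Injective f) (Z : Ω → γ) :
    condEnt μ (fun ω => f (T ω)) Z = condEnt μ T Z :=
  congrArg (· - ent μ Z) (ent_comp_of_injective μ (fun ω => (T ω, Z ω)) (hf.prodMap injective_id))

lemma condEnt_eq_zero_of_unique [Unique β] (T : Ω → β) (Z : Ω → γ) : condEnt μ T Z = 0 := by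
  have hT : (fun ω => (T ω, Z ω)) = fun ω => (default, Z ω) :=
    funext fun ω => by rw [Unique.eq_default (T ω)]
  rw [condEnt, hT, ent_comp_of_injective μ Z (Prod.mk_right_injective default), sub_self]

lemma condEnt_pi_le (hμ : ∀ ω, 0 ≤ μ ω) (Z : Ω → γ) :
    ∀ {n : ℕ} (X : Fin n → Ω → α), condEnt μ (fun ω i => X i ω) Z ≤ ∑ i, condEnt μ (X i) Z
  | 0, X => by simp [condEnt_eq_zero_of_unique]
  | n + 1, X => by
    have hcons : (fun ω i => X i ω) = fun ω => Fin.consEquiv (fun _ => α)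
        (X 0 ω, fun i : Fin n => X i.succ ω) :=
      funext fun ω => (Fin.cons_self_tail _).symm
    rw [hcons, condEnt_comp_of_injective μ _ (Fin.consEquiv _).injective, Fin.sum_univ_succ]
    calc condEnt μ (fun ω => (X 0 ω, fun i : Fin n => X i.succ ω)) Z
        ≤ condEnt μ (X 0) Z + condEnt μ (fun ω i => X (Fin.succ i) ω) Z :=
          condEnt_pair_le μ hμ _ _ Z
      _ ≤ condEnt μ (X 0) Z + ∑ i : Fin n, condEnt μ (X i.succ) Z :=
          add_le_add_right (condEnt_pi_le hμ Z fun i => X i.succ) _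

lemma condMI_eq_condEnt_sub_condEnt (X : Ω → α) (Y : Ω → β) (Z : Ω → γ) :
    condMI μ X Y Z = condEnt μ X Z - condEnt μ X (fun ω => (Y ω, Z ω)) := by
  have h : ent μ (fun ω => ((X ω, Y ω), Z ω)) = ent μ (fun ω => (X ω, (Y ω, Z ω))) :=
    ent_comp_of_injective μ (fun ω => (X ω, (Y ω, Z ω))) (Equiv.prodAssoc α β γ).symm.injective
  rw [condMI, condEnt, condEnt, condEnt, condEnt, h]
  ring

lemma condEnt_eq_of_distOf_pair_eq_mul (T : Ω → α) (Z : Ω → γ) (r : γ → α → ℝ)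
    (hT : ∀ t z, distOf μ (fun ω => (T ω, Z ω)) (t, z) = distOf μ Z z * r z t)
    (hr : ∀ z, distOf μ Z z ≠ 0 → ∑ t, r z t = 1) :
    condEnt μ T Z = ∑ z, distOf μ Z z * ∑ t, negMulLog (r z t) := by
  have hz z : ∑ t, negMulLog (distOf μ Z z * r z t)
      = negMulLog (distOf μ Z z) + distOf μ Z z * ∑ t, negMulLog (r z t) := by
    simp only [negMulLog_mul, sum_add_distrib, ← sum_mul, ← mul_sum]
    by_cases h : distOf μ Z z = 0
    · simp [h]
    · rw [hr z h, one_mul]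
  rw [condEnt, ent_pair]
  simp only [hT, hz, sum_add_distrib]
  rw [ent, add_sub_cancel_left]

end ConditionalEntropy

section Product

open Real

variable {α : Type*} [Fintype α]

lemma sum_pi_fin_succ {n : ℕ} (F : (Fin (n + 1) → α) → ℝ) :
    ∑ v, F v = ∑ a, ∑ w : Fin n → α, F (Fin.cons a w) := by
  rw [← (Fin.consEquiv fun _ => α).sum_comp, Fintype.sum_prod_type]
  rfl

lemma sum_negMulLog_prod {f : α → ℝ} (hf : ∑ a, f a = 1) :
    ∀ n : ℕ, ∑ v : Fin n → α, negMulLog (∏ i, f (v i)) = n * ∑ a, negMulLog (f a)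
  | 0 => by simp
  | n + 1 => by
    simp_rw [sum_pi_fin_succ, Fin.prod_univ_succ, Fin.cons_zero, Fin.cons_succ, negMulLog_mul,
      sum_add_distrib, ← mul_sum, sum_negMulLog_prod hf n, ← sum_mul, ← Fintype.sum_pow, hf,
      one_pow, one_mul]
    push_cast
    ring

lemma sum_ite_zero_prod (f : α → ℝ) (a : α) (n : ℕ) :
    ∑ v : Fin (n + 1) → α, (if v 0 = a then ∏ i, f (v i) else 0) = f a * (∑ b, f b) ^ n := by
  simp [sum_pi_fin_succ, Fin.prod_univ_succ, ← mul_sum, ← Fintype.sum_pow]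

end Product

section ConditionallyIID

open Real

variable {Ω α γ : Type*} [Fintype Ω] [Fintype α] [Fintype γ] (μ : Ω → ℝ) {n : ℕ}

abbrev IsCondIID (X : Fin n → Ω → α) (Z : Ω → γ) (q : γ → α → ℝ) : Prop :=
  ∀ v z, distOf μ (fun ω => ((fun i => X i ω), Z ω)) (v, z) = distOf μ Z z * ∏ i, q z (v i)

variable (X : Fin (n + 1) → Ω → α) (Z : Ω → γ) {q : γ → α → ℝ}

lemma sum_eq_one_of_condIID (hq : ∀ z a, 0 ≤ q z a)
    (hiid : IsCondIID μ X Z q)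
    {z : γ} (hz : distOf μ Z z ≠ 0) : ∑ a, q z a = 1 := by
  have h := sum_distOf_pair μ (fun ω i => X i ω) Z z
  simp_rw [hiid, ← mul_sum, ← Fintype.sum_pow] at h
  have hpow : (∑ a, q z a) ^ (n + 1) = 1 := mul_left_cancel₀ hz (h.trans (mul_one _).symm)
  exact (pow_eq_one_iff_of_nonneg (sum_nonneg fun a _ => hq z a) n.succ_ne_zero).1 hpow

lemma distOf_zero_pair_of_condIID (hq : ∀ z a, 0 ≤ q z a)
    (hiid : IsCondIID μ X Z q)
    (a : α) (z : γ) : distOf μ (fun ω => (X 0 ω, Z ω)) (a, z) = distOf μ Z z * q z a := by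
  calc distOf μ (fun ω => (X 0 ω, Z ω)) (a, z)
      = ∑ v, if v 0 = a then distOf μ (fun ω => ((fun i => X i ω), Z ω)) (v, z) else 0 := by
        refine (distOf_comp μ (fun ω => ((fun i => X i ω), Z ω)) (fun t => (t.1 0, t.2))
          (a, z)).trans ?_
        simp [Fintype.sum_prod_type, ite_and]
    _ = distOf μ Z z * (q z a * (∑ b, q z b) ^ n) := by
        rw [← sum_ite_zero_prod, mul_sum]
        simp_rw [mul_ite, mul_zero, hiid]
    _ = distOf μ Z z * q z a := by
        by_cases hz : distOf μ Z z = 0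
        · simp [hz]
        · rw [sum_eq_one_of_condIID μ X Z hq hiid hz, one_pow, mul_one]

lemma condEnt_pi_of_condIID (hq : ∀ z a, 0 ≤ q z a)
    (hiid : IsCondIID μ X Z q) :
    condEnt μ (fun ω i => X i ω) Z = (n + 1) * condEnt μ (X 0) Z := by
  have hnorm z (hz : distOf μ Z z ≠ 0) := sum_eq_one_of_condIID μ X Z hq hiid hz
  rw [condEnt_eq_of_distOf_pair_eq_mul μ (fun ω i => X i ω) Z (fun z v => ∏ i, q z (v i)) hiid
      fun z hz => by rw [← Fintype.sum_pow, hnorm z hz, one_pow],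
    condEnt_eq_of_distOf_pair_eq_mul μ (X 0) Z q (distOf_zero_pair_of_condIID μ X Z hq hiid) hnorm,
    mul_sum]
  refine sum_congr rfl fun z _ => ?_
  by_cases hz : distOf μ Z z = 0
  · simp [hz]
  · rw [sum_negMulLog_prod (hnorm z hz)]
    push_cast
    ring

end ConditionallyIID

lemma condEnt_eq_of_perm_invariant {Ω α β γ : Type*} [Fintype Ω] [Fintype α] [Fintype β]
    [Fintype γ] (μ : Ω → ℝ) {n : ℕ} (X : Fin n → Ω → α) (V : Ω → β)
    (hperm : ∀ (π : Equiv.Perm (Fin n)) v b,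
      distOf μ (fun ω => ((fun i => X (π i) ω), V ω)) (v, b)
        = distOf μ (fun ω => ((fun i => X i ω), V ω)) (v, b))
    (g : β → γ) (i j : Fin n) :
    condEnt μ (X i) (fun ω => g (V ω)) = condEnt μ (X j) (fun ω => g (V ω)) := by
  have h := ent_comp_congr μ (T := fun ω => ((fun k => X (Equiv.swap i j k) ω), V ω))
    (T' := fun ω => ((fun k => X k ω), V ω)) (fun t => hperm _ t.1 t.2) fun t => (t.1 j, g t.2)
  simp only [Equiv.swap_apply_right] at h
  rw [condEnt, condEnt, h]

theorem stmt3_general {Ω α β σ τ : Type*} [Fintype Ω] [Fintype α] [Fintype β] [Fintype σ] [Fintype τ]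
    {K : ℕ} (hK : 0 < K)
    (μ : Ω → ℝ) (hμ0 : ∀ ω, 0 ≤ μ ω)
    (X : Fin K → Ω → α) (Y : Ω → β) (S : Ω → σ) (W : Ω → τ)
    -- `X_1, …, X_K` are conditionally i.i.d. given `(S, W)`
    (q : σ × τ → α → ℝ) (hq : ∀ sw a, 0 ≤ q sw a)
    (hiid : ∀ (v : Fin K → α) (sw : σ × τ),
      distOf μ (fun ω => ((fun i => X i ω), (S ω, W ω))) (v, sw)
        = distOf μ (fun ω => (S ω, W ω)) sw * ∏ i, q sw (v i))
    -- the joint law of `(X_1, …, X_K, Y, S, W)` is invariant under permutations of the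
    -- `X`-indices (as in the paper, where the collusion channel is permutation-invariant)
    (hperm : ∀ (π : Equiv.Perm (Fin K)) (v : Fin K → α) (z : β × σ × τ),
      distOf μ (fun ω => ((fun i => X (π i) ω), (Y ω, S ω, W ω))) (v, z)
        = distOf μ (fun ω => ((fun i => X i ω), (Y ω, S ω, W ω))) (v, z)) :
    condMI μ (X ⟨0, hK⟩) Y (fun ω => (S ω, W ω))
      ≤ (1 / (K : ℝ)) * condMI μ (fun ω => fun i => X i ω) Y (fun ω => (S ω, W ω)) := by
  obtain ⟨n, rfl⟩ := Nat.exists_eq_add_one_of_ne_zero hK.ne'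
  set Z := fun ω => (S ω, W ω)
  have hsym (i : Fin (n + 1)) :
      condEnt μ (X i) (fun ω => (Y ω, Z ω)) = condEnt μ (X 0) (fun ω => (Y ω, Z ω)) :=
    condEnt_eq_of_perm_invariant μ X _ hperm id i 0
  have hsub : condEnt μ (fun ω i => X i ω) (fun ω => (Y ω, Z ω))
      ≤ (n + 1) * condEnt μ (X 0) (fun ω => (Y ω, Z ω)) := by
    simpa [hsym] using condEnt_pi_le μ hμ0 (fun ω => (Y ω, Z ω)) X
  rw [show (⟨0, hK⟩ : Fin (n + 1)) = 0 from rfl, condMI_eq_condEnt_sub_condEnt,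
    condMI_eq_condEnt_sub_condEnt, condEnt_pi_of_condIID μ X Z hq hiid, one_div,
    le_inv_mul_iff₀ (by positivity)]
  push_cast
  linarith

theorem stmt3 {Ω α β σ τ : Type*} [Fintype Ω] [Fintype α] [Fintype β] [Fintype σ] [Fintype τ]
    {K : ℕ} (hK : 0 < K)
    (μ : Ω → ℝ) (hμ0 : ∀ ω, 0 ≤ μ ω) (hμ1 : ∑ ω, μ ω = 1)
    (X : Fin K → Ω → α) (Y : Ω → β) (S : Ω → σ) (W : Ω → τ)
    -- `X_1, …, X_K` are conditionally i.i.d. given `(S, W)`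
    (q : σ × τ → α → ℝ) (hq : ∀ sw a, 0 ≤ q sw a)
    (hiid : ∀ (v : Fin K → α) (sw : σ × τ),
      distOf μ (fun ω => ((fun i => X i ω), (S ω, W ω))) (v, sw)
        = distOf μ (fun ω => (S ω, W ω)) sw * ∏ i, q sw (v i))
    -- the joint law of `(X_1, …, X_K, Y, S, W)` is invariant under permutations of the
    -- `X`-indices (as in the paper, where the collusion channel is permutation-invariant)
    (hperm : ∀ (π : Equiv.Perm (Fin K)) (v : Fin K → α) (z : β × σ × τ),
      distOf μ (fun ω => ((fun i => X (π i) ω), (Y ω, S ω, W ω))) (v, z)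
        = distOf μ (fun ω => ((fun i => X i ω), (Y ω, S ω, W ω))) (v, z)) :
    condMI μ (X ⟨0, hK⟩) Y (fun ω => (S ω, W ω))
      ≤ (1 / (K : ℝ)) * condMI μ (fun ω => fun i => X i ω) Y (fun ω => (S ω, W ω)) :=
  stmt3_general hK μ hμ0 X Y S W q hq hiid hperm
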